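/- arXiv:1304.2114 — 2 statements merged into one kernel-verified Lean document; each statement's English description precedes it below -/
import Mathlib

section
/- On the critical line s = 1/2 + iu, the multiplicator m(s) = Γ(−s/2 + ν/2 + 1)·Γ(−s/2 − ν/2 + 1/2) / (Γ(1/2 − s/2)·Γ(1 − s/2)) satisfies |m(1/2 + iu)| = √(cosh(π u)/(cosh(π u) − sin(π ν))) for all real u and real ν with cosh(π u) > sin(π ν). -/
open Complex Real
open scoped ComplexConjugate

/-! Conjugation pairs the Gamma factors as `Γ(z) Γ(1 - z̄)`, the modulus of which is `π / |sin(π z)|`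
by the reflection formula, since `|Γ(1 - z̄)| = |Γ(1 - z)|`. The multiplicator thus has modulus
`|sin(π (3/4 - iu/2))| / |sin(π (3/4 + ν/2 - iu/2))|`, and `|sin(x + iy)|² = (cosh 2y - cos 2x)/2`. -/

theorem Complex.norm_sin_add_mul_I_sq (x y : ℝ) :
    ‖sin (x + y * I)‖ ^ 2 = (Real.cosh (2 * y) - Real.cos (2 * x)) / 2 := by
  have hsin : sin (x + y * I) =
      ↑(Real.sin x * Real.cosh y) + ↑(Real.cos x * Real.sinh y) * I := by
    rw [sin_add_mul_I]
    push_cast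
    ring
  rw [hsin, Complex.sq_norm, normSq_add_mul_I, Real.cosh_two_mul, Real.cos_two_mul]
  linear_combination (Real.sin x ^ 2 - 1 / 2) * Real.cosh_sq_sub_sinh_sq y +
    (Real.sinh y ^ 2 + 1) * Real.sin_sq_add_cos_sq x

theorem Complex.norm_Gamma_mul_Gamma_one_sub_conj (z : ℂ) :
    ‖Gamma z * Gamma (1 - conj z)‖ = π / ‖sin (π * z)‖ := by
  rw [norm_mul, ← norm_conj (Gamma (1 - conj z)), ← Gamma_conj, map_sub, map_one, conj_conj,
    ← norm_mul, Gamma_mul_Gamma_one_sub, norm_div, norm_real, Real.norm_of_nonneg pi_pos.le]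

theorem multiplicator_abs_on_critical_line_general (u ν : ℝ) :
    ‖Complex.Gamma (-(1 / 2 + Complex.I * ↑u) / 2 + ↑ν / 2 + 1) *
          Complex.Gamma (-(1 / 2 + Complex.I * ↑u) / 2 - ↑ν / 2 + 1 / 2) /
        (Complex.Gamma (1 / 2 - (1 / 2 + Complex.I * ↑u) / 2) *
          Complex.Gamma (1 - (1 / 2 + Complex.I * ↑u) / 2))‖ =
      Real.sqrt (Real.cosh (Real.pi * u) /
        (Real.cosh (Real.pi * u) - Real.sin (Real.pi * ν))) := by
  have hnum : -(1 / 2 + I * ↑u) / 2 - ↑ν / 2 + 1 / 2 =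
      1 - conj (-(1 / 2 + I * ↑u) / 2 + ↑ν / 2 + 1) := by
    simp only [map_add, map_div₀, map_neg, map_mul, map_one, map_ofNat, conj_I, conj_ofReal]
    ring
  have hden : 1 / 2 - (1 / 2 + I * ↑u) / 2 = 1 - conj (1 - (1 / 2 + I * ↑u) / 2) := by
    simp only [map_add, map_sub, map_div₀, map_mul, map_one, map_ofNat, conj_I, conj_ofReal]
    ring
  have hw : ↑π * (-(1 / 2 + I * ↑u) / 2 + ↑ν / 2 + 1) =
      ↑(π * ν / 2 + 3 * π / 4) + ↑(-(π * u) / 2) * I := by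
    push_cast
    ring
  have hd : ↑π * (1 - (1 / 2 + I * ↑u) / 2) = ↑(3 * π / 4) + ↑(-(π * u) / 2) * I := by
    push_cast
    ring
  have hsin_num : ‖sin (↑π * (-(1 / 2 + I * ↑u) / 2 + ↑ν / 2 + 1))‖ ^ 2 =
      (Real.cosh (π * u) - Real.sin (π * ν)) / 2 := by
    rw [hw, norm_sin_add_mul_I_sq, show 2 * (-(π * u) / 2) = -(π * u) by ring, Real.cosh_neg,
      show 2 * (π * ν / 2 + 3 * π / 4) = π * ν - π / 2 + 2 * π by ring,
      Real.cos_add_two_pi, Real.cos_sub_pi_div_two]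
  have hsin_den : ‖sin (↑π * (1 - (1 / 2 + I * ↑u) / 2))‖ ^ 2 = Real.cosh (π * u) / 2 := by
    rw [hd, norm_sin_add_mul_I_sq, show 2 * (-(π * u) / 2) = -(π * u) by ring, Real.cosh_neg,
      show 2 * (3 * π / 4) = π / 2 + π by ring, Real.cos_add_pi, Real.cos_pi_div_two,
      neg_zero, sub_zero]
  rw [norm_div, hnum, hden, mul_comm (Complex.Gamma (1 - conj _)),
    norm_Gamma_mul_Gamma_one_sub_conj, norm_Gamma_mul_Gamma_one_sub_conj,
    div_div_div_cancel_left' _ _ (by positivity),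
    ← Real.sqrt_sq (by positivity : (0 : ℝ) ≤ _ / _), div_pow, hsin_num, hsin_den,
    div_div_div_cancel_right₀ two_ne_zero]

/-- On the critical line `s = 1/2 + iu`, the multiplicator
`m(s) = Γ(−s/2+ν/2+1)Γ(−s/2−ν/2+1/2)/(Γ(1/2−s/2)Γ(1−s/2))` has modulus
`√(cosh(π u)/(cosh(π u) − sin(π ν)))`. -/
theorem multiplicator_abs_on_critical_line (u ν : ℝ)
    (h : Real.sin (Real.pi * ν) < Real.cosh (Real.pi * u)) :
    ‖Complex.Gamma (-(1 / 2 + Complex.I * ↑u) / 2 + ↑ν / 2 + 1) *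
          Complex.Gamma (-(1 / 2 + Complex.I * ↑u) / 2 - ↑ν / 2 + 1 / 2) /
        (Complex.Gamma (1 / 2 - (1 / 2 + Complex.I * ↑u) / 2) *
          Complex.Gamma (1 - (1 / 2 + Complex.I * ↑u) / 2))‖ =
      Real.sqrt (Real.cosh (Real.pi * u) /
        (Real.cosh (Real.pi * u) - Real.sin (Real.pi * ν))) :=
  multiplicator_abs_on_critical_line_general u ν
end

section
/- The Poisson operator P_ν f(x) = (1/(Γ(ν+1)·2^ν·x^{2ν})) ∫₀ˣ (x² − t²)^{ν − 1/2} f(t) dt satisfies the transmutation identity P_ν(f'') = B_ν(P_ν f), where B_ν u = u'' + ((2ν+1)/x) u', for all f ∈ C_c^∞(0,∞) and ν with Re ν > −1/2. -/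
open MeasureTheory Set

/-- The Poisson transmutation operator
`P_ν f(x) = (1/(Γ(ν+1)·2^ν·x^{2ν})) ∫₀ˣ (x² − t²)^{ν − 1/2} f(t) dt`. -/
noncomputable def poissonOp (ν : ℂ) (f : ℝ → ℂ) (x : ℝ) : ℂ :=
  (1 / (Complex.Gamma (ν + 1) * (2 : ℂ) ^ ν * (x : ℂ) ^ (2 * ν))) *
    ∫ t in Set.Ioo (0 : ℝ) x, ((x ^ 2 - t ^ 2 : ℝ) : ℂ) ^ (ν - 1 / 2) * f t

set_option maxHeartbeats 1000000

namespace PoissonAux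

open Filter

lemma int_Ioo (φ : ℝ → ℂ) : ∫ s in (0:ℝ)..1, φ s = ∫ s in Ioo (0:ℝ) 1, φ s := by
  rw [intervalIntegral.integral_of_le zero_le_one,
    MeasureTheory.integral_Ioc_eq_integral_Ioo]

lemma re_half : ((1:ℂ)/2).re = 1/2 := by norm_num

lemma contOn_base {μ : ℂ} :
    ContinuousOn (fun s : ℝ => ((1 - s ^ 2 : ℝ) : ℂ) ^ μ) (Ioo (0:ℝ) 1) := by
  intro s hs
  have h1 : (0:ℝ) < 1 - s ^ 2 := by nlinarith [hs.1, hs.2]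
  have hbase : Continuous (fun s : ℝ => ((1 - s ^ 2 : ℝ) : ℂ)) := by
    exact Complex.continuous_ofReal.comp (by continuity)
  have hc : ContinuousAt (fun z : ℂ => z ^ μ) ((1 - s ^ 2 : ℝ) : ℂ) := by
    apply continuousAt_cpow_const
    exact Or.inl (by rw [Complex.ofReal_re]; linarith)
  exact (ContinuousAt.comp (f := fun s : ℝ => ((1 - s ^ 2 : ℝ) : ℂ))
    (g := (· ^ μ)) hc hbase.continuousAt).continuousWithinAt

lemma integrableOn_w {μ : ℂ} (hμ : -1 < μ.re) :
    IntegrableOn (fun s : ℝ => ((1 - s ^ 2 : ℝ) : ℂ) ^ μ) (Ioo (0:ℝ) 1) := by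
  set M : ℝ := max 1 ((2:ℝ) ^ μ.re) with hM
  have hdom : IntegrableOn (fun s : ℝ => M * (1 - s) ^ μ.re) (Ioo (0:ℝ) 1) := by
    have h := (intervalIntegral.intervalIntegrable_rpow'
      (a := (0:ℝ)) (b := 1) hμ).comp_sub_left 1
    simp only [sub_self, sub_zero] at h
    have h2 := (intervalIntegrable_iff_integrableOn_Ioo_of_le zero_le_one).mp h.symm
    exact h2.const_mul M
  refine Integrable.mono' hdom (contOn_base.aestronglyMeasurable measurableSet_Ioo) ?_
  filter_upwards [ae_restrict_mem measurableSet_Ioo] with s hs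
  have h0 : (0:ℝ) < 1 - s := by linarith [hs.2]
  have h0' : (0:ℝ) < 1 + s := by linarith [hs.1]
  have h1 : (0:ℝ) < 1 - s ^ 2 := by nlinarith
  have hnorm : ‖((1 - s ^ 2 : ℝ) : ℂ) ^ μ‖ = (1 - s ^ 2 : ℝ) ^ μ.re := by
    rw [Complex.norm_cpow_eq_rpow_re_of_pos h1]
  rw [hnorm]
  have hfact : (1 - s ^ 2 : ℝ) = (1 - s) * (1 + s) := by ring
  rw [hfact, Real.mul_rpow h0.le h0'.le]
  have hb : (1 + s) ^ μ.re ≤ M := by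
    rcases le_or_gt 0 μ.re with hp | hp
    · calc (1 + s) ^ μ.re ≤ (2:ℝ) ^ μ.re :=
            Real.rpow_le_rpow (by linarith) (by linarith [hs.2]) hp
        _ ≤ M := le_max_right _ _
    · calc (1 + s) ^ μ.re ≤ 1 :=
            Real.rpow_le_one_of_one_le_of_nonpos (by linarith [hs.1]) hp.le
        _ ≤ M := le_max_left _ _
  calc (1 - s) ^ μ.re * (1 + s) ^ μ.re ≤ (1 - s) ^ μ.re * M :=
        mul_le_mul_of_nonneg_left hb (Real.rpow_nonneg h0.le _)
    _ = M * (1 - s) ^ μ.re := mul_comm _ _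

lemma mul_bdd_integrable {φ : ℝ → ℂ} (hφ : IntegrableOn φ (Ioo (0:ℝ) 1))
    {ψ : ℝ → ℂ} (hψ : Continuous ψ) {C : ℝ} (hC : ∀ s ∈ Ioo (0:ℝ) 1, ‖ψ s‖ ≤ C) :
    IntegrableOn (fun s => φ s * ψ s) (Ioo (0:ℝ) 1) := by
  refine Integrable.mono' (hφ.norm.mul_const C)
    (hφ.aestronglyMeasurable.mul (hψ.aestronglyMeasurable.restrict)) ?_
  filter_upwards [ae_restrict_mem measurableSet_Ioo] with s hs
  rw [norm_mul]
  exact mul_le_mul_of_nonneg_left (hC s hs) (norm_nonneg _)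

lemma hasDerivAt_param (φ : ℝ → ℂ) (hφ : IntegrableOn φ (Ioo (0:ℝ) 1))
    (h : ℝ → ℂ) (hh : ContDiff ℝ ((⊤:ℕ∞):WithTop ℕ∞) h) (hcs : HasCompactSupport h)
    (x : ℝ) :
    HasDerivAt (fun y => ∫ s in Ioo (0:ℝ) 1, φ s * h (y * s))
      (∫ s in Ioo (0:ℝ) 1, φ s * ((s : ℂ) * deriv h (x * s))) x := by
  have hdc : Continuous (deriv h) := (contDiff_infty_iff_deriv.mp hh).2.continuous
  obtain ⟨C, hC⟩ := (hcs.deriv).exists_bound_of_continuous hdc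
  have hmeas : ∀ y : ℝ, AEStronglyMeasurable (fun s => φ s * h (y * s))
      (volume.restrict (Ioo (0:ℝ) 1)) := fun y =>
    hφ.aestronglyMeasurable.mul
      ((hh.continuous.comp (continuous_const.mul continuous_id)).aestronglyMeasurable)
  have hint : Integrable (fun s => φ s * h (x * s)) (volume.restrict (Ioo (0:ℝ) 1)) := by
    obtain ⟨D, hD⟩ := hcs.exists_bound_of_continuous hh.continuous
    refine Integrable.mono' (hφ.norm.mul_const D) (hmeas x) ?_
    filter_upwards with s
    rw [norm_mul]
    exact mul_le_mul_of_nonneg_left (hD _) (norm_nonneg _)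
  have hmeas' : AEStronglyMeasurable (fun s => φ s * ((s:ℂ) * deriv h (x * s)))
      (volume.restrict (Ioo (0:ℝ) 1)) := by
    refine hφ.aestronglyMeasurable.mul (Continuous.aestronglyMeasurable ?_)
    exact Complex.continuous_ofReal.mul (hdc.comp (continuous_const.mul continuous_id))
  have hbound : ∀ᵐ s ∂(volume.restrict (Ioo (0:ℝ) 1)), ∀ y ∈ Metric.ball x 1,
      ‖φ s * ((s:ℂ) * deriv h (y * s))‖ ≤ ‖φ s‖ * C := by
    filter_upwards [ae_restrict_mem measurableSet_Ioo] with s hs y _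
    rw [norm_mul]
    refine mul_le_mul_of_nonneg_left ?_ (norm_nonneg _)
    rw [norm_mul]
    calc ‖(s:ℂ)‖ * ‖deriv h (y * s)‖ ≤ 1 * C := by
          refine mul_le_mul ?_ (hC _) (norm_nonneg _) zero_le_one
          rw [Complex.norm_real, Real.norm_eq_abs, abs_of_pos hs.1]
          exact hs.2.le
      _ = C := one_mul C
  have hbint : Integrable (fun s => ‖φ s‖ * C) (volume.restrict (Ioo (0:ℝ) 1)) :=
    hφ.norm.mul_const C
  have hdiff : ∀ᵐ s ∂(volume.restrict (Ioo (0:ℝ) 1)), ∀ y ∈ Metric.ball x 1,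
      HasDerivAt (fun y : ℝ => φ s * h (y * s)) (φ s * ((s:ℂ) * deriv h (y * s))) y := by
    filter_upwards with s y _
    have h1 : HasDerivAt (fun y : ℝ => y * s) s y := hasDerivAt_mul_const s
    have h2 : HasDerivAt h (deriv h (y * s)) (y * s) :=
      ((hh.differentiable (by simp)) (y * s)).hasDerivAt
    have h3 := (h2.scomp y h1).const_mul (φ s)
    simp only [Function.comp_def, Complex.real_smul] at h3
    exact h3
  exact (hasDerivAt_integral_of_dominated_loc_of_deriv_le (Metric.ball_mem_nhds x one_pos)
    (Eventually.of_forall hmeas) hint hmeas' hbound hbint hdiff).2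

lemma cpow_two_mul {y : ℝ} (hy : 0 < y) (c : ℂ) :
    ((y ^ 2 : ℝ) : ℂ) ^ c = (y : ℂ) ^ (2 * c) := by
  have harg : Complex.arg (y : ℂ) = 0 := Complex.arg_ofReal_of_nonneg hy.le
  have h := Complex.cpow_nat_mul' (x := (y : ℂ)) (n := 2)
    (by rw [harg]; simpa using Real.pi_pos) (by rw [harg]; simp [Real.pi_pos.le]) c
  rw [Complex.ofReal_pow]
  push_cast at h ⊢
  rw [← h]

lemma poisson_eq (ν : ℂ) (hν : -1 / 2 < ν.re) (g : ℝ → ℂ) {y : ℝ} (hy : 0 < y) :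
    poissonOp ν g y = (1 / (Complex.Gamma (ν + 1) * (2 : ℂ) ^ ν)) *
      ∫ s in Ioo (0:ℝ) 1, ((1 - s ^ 2 : ℝ) : ℂ) ^ (ν - 1 / 2) * g (y * s) := by
  have hy' : (y : ℂ) ≠ 0 := Complex.ofReal_ne_zero.mpr hy.ne'
  have key : ∫ t in Ioo (0:ℝ) y, ((y ^ 2 - t ^ 2 : ℝ) : ℂ) ^ (ν - 1/2) * g t
      = (y : ℂ) * (((y^2:ℝ):ℂ) ^ (ν - 1/2) *
          ∫ s in Ioo (0:ℝ) 1, ((1 - s ^ 2 : ℝ) : ℂ) ^ (ν - 1 / 2) * g (y * s)) := by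
    have h1 : ∫ t in Ioo (0:ℝ) y, ((y ^ 2 - t ^ 2 : ℝ) : ℂ) ^ (ν - 1/2) * g t
        = ∫ t in (0:ℝ)..y, ((y ^ 2 - t ^ 2 : ℝ) : ℂ) ^ (ν - 1/2) * g t := by
      rw [intervalIntegral.integral_of_le hy.le,
        MeasureTheory.integral_Ioc_eq_integral_Ioo]
    have h2 := intervalIntegral.smul_integral_comp_mul_left
      (a := (0:ℝ)) (b := 1) (fun t => ((y ^ 2 - t ^ 2 : ℝ) : ℂ) ^ (ν - 1/2) * g t) y
    simp only [mul_zero, mul_one] at h2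
    rw [h1, ← h2, int_Ioo]
    have h3 : ∫ s in Ioo (0:ℝ) 1, ((y ^ 2 - (y * s) ^ 2 : ℝ) : ℂ) ^ (ν - 1/2) * g (y * s)
        = ∫ s in Ioo (0:ℝ) 1, ((y^2:ℝ):ℂ) ^ (ν - 1/2) *
            (((1 - s ^ 2 : ℝ) : ℂ) ^ (ν - 1 / 2) * g (y * s)) := by
      refine setIntegral_congr_fun measurableSet_Ioo (fun s hs => ?_)
      have hfact : (y ^ 2 - (y * s) ^ 2 : ℝ) = y ^ 2 * (1 - s ^ 2) := by ring
      rw [hfact, Complex.ofReal_mul,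
        Complex.mul_cpow_ofReal_nonneg (sq_nonneg y) (by nlinarith [hs.1, hs.2]), mul_assoc]
    rw [h3, integral_const_mul, Complex.real_smul]
  unfold poissonOp
  rw [key]
  have hpow : ((y^2:ℝ):ℂ) ^ (ν - 1/2) = (y:ℂ) ^ (2*ν - 1) := by
    rw [cpow_two_mul hy]; ring_nf
  have hsplit : (y : ℂ) ^ (2 * ν) = (y : ℂ) * (y : ℂ) ^ (2*ν - 1) := by
    have := Complex.cpow_add 1 (2*ν - 1) hy'
    simp only [Complex.cpow_one] at this
    rw [← this]; ring_nf
  have hz : (y : ℂ) ^ (2 * ν) ≠ 0 := by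
    rw [Complex.cpow_def_of_ne_zero hy']
    exact Complex.exp_ne_zero _
  have hΓ : Complex.Gamma (ν + 1) ≠ 0 := by
    apply Complex.Gamma_ne_zero_of_re_pos
    simp only [Complex.add_re, Complex.one_re]
    linarith
  have h2ν : (2:ℂ) ^ ν ≠ 0 := by
    rw [Complex.cpow_def_of_ne_zero (by norm_num)]
    exact Complex.exp_ne_zero _
  rw [hpow]
  rw [hsplit] at hz ⊢
  have hz2 : (y:ℂ) ^ (2*ν - 1) ≠ 0 := right_ne_zero_of_mul hz
  have hy1 : (y:ℂ)⁻¹ * (y:ℂ) = 1 := inv_mul_cancel₀ hy'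
  have hY1 : ((y:ℂ) ^ (2*ν - 1))⁻¹ * (y:ℂ) ^ (2*ν - 1) = 1 := inv_mul_cancel₀ hz2
  linear_combination ((Complex.Gamma (ν + 1) * (2 : ℂ) ^ ν)⁻¹ *
      (∫ s in Ioo (0:ℝ) 1, ((1 - s ^ 2 : ℝ) : ℂ) ^ (ν - 1 / 2) * g (y * s)) * (y:ℂ)⁻¹ * y) * hY1
    + ((Complex.Gamma (ν + 1) * (2 : ℂ) ^ ν)⁻¹ *
      (∫ s in Ioo (0:ℝ) 1, ((1 - s ^ 2 : ℝ) : ℂ) ^ (ν - 1 / 2) * g (y * s))) * hy1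

lemma ibp (ν : ℂ) (hν : -1 / 2 < ν.re) (f : ℝ → ℂ) (hf : ContDiff ℝ (⊤ : ℕ∞) f)
    (hsupp : HasCompactSupport f) (hpos : tsupport f ⊆ Set.Ioi (0 : ℝ))
    {x : ℝ} (hx : 0 < x) :
    (x:ℂ) * ∫ s in Ioo (0:ℝ) 1, ((1 - s^2:ℝ):ℂ) ^ (ν + 1/2) * deriv (deriv f) (x*s)
      = (2*ν+1) * ∫ s in Ioo (0:ℝ) 1,
          ((1 - s^2:ℝ):ℂ) ^ (ν - 1/2) * ((s:ℂ) * deriv f (x*s)) := by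
  have hf1 : ContDiff ℝ ((⊤:ℕ∞):WithTop ℕ∞) f := hf.of_le (by simp)
  obtain ⟨hfd, hf2⟩ := contDiff_infty_iff_deriv.mp hf1
  obtain ⟨hfd2, hf3⟩ := contDiff_infty_iff_deriv.mp hf2
  have hf0 : deriv f 0 = 0 := by
    have h0 : (0:ℝ) ∉ tsupport f := fun h => lt_irrefl 0 (mem_Ioi.mp (hpos h))
    have hev : f =ᶠ[nhds 0] (fun _ => 0) := by
      filter_upwards [(isClosed_tsupport f).isOpen_compl.mem_nhds h0] with t ht
      exact image_eq_zero_of_notMem_tsupport ht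
    rw [hev.deriv_eq, deriv_const]
  have hre : (ν + 1/2).re = ν.re + 1/2 := by
    simp [Complex.add_re, re_half]
  have hne : (ν + 1/2) ≠ 0 := fun h => by
    rw [h] at hre; simp at hre; linarith
  set u : ℝ → ℂ := fun s => ((1 - s^2:ℝ):ℂ) ^ (ν + 1/2) * deriv f (x*s) with hu
  set u' : ℝ → ℂ := fun s =>
    (-(2*ν+1)) * (((1 - s^2:ℝ):ℂ) ^ (ν - 1/2) * ((s:ℂ) * deriv f (x*s)))
      + (x:ℂ) * (((1 - s^2:ℝ):ℂ) ^ (ν + 1/2) * deriv (deriv f) (x*s)) with hu'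
  have hcsc : HasCompactSupport (fun s : ℝ => deriv f (x*s)) := by
    have := (hsupp.deriv).comp_homeomorph (Homeomorph.mulLeft₀ x hx.ne')
    simpa [Function.comp_def] using this
  have hccont : Continuous (fun s : ℝ => deriv f (x*s)) :=
    hf2.continuous.comp (continuous_const.mul continuous_id)
  have hcsc1 : HasCompactSupport (fun s : ℝ => (s:ℂ) * deriv f (x*s)) :=
    hcsc.mul_left
  have hccont1 : Continuous (fun s : ℝ => (s:ℂ) * deriv f (x*s)) :=
    Complex.continuous_ofReal.mul hccont
  obtain ⟨C1, hC1⟩ := hcsc1.exists_bound_of_continuous hccont1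
  have hcsc2 : HasCompactSupport (fun s : ℝ => deriv (deriv f) (x*s)) := by
    have := (hsupp.deriv.deriv).comp_homeomorph (Homeomorph.mulLeft₀ x hx.ne')
    simpa [Function.comp_def] using this
  have hccont2 : Continuous (fun s : ℝ => deriv (deriv f) (x*s)) :=
    hf3.continuous.comp (continuous_const.mul continuous_id)
  obtain ⟨C2, hC2⟩ := hcsc2.exists_bound_of_continuous hccont2
  have i1 : IntegrableOn
      (fun s => ((1 - s^2:ℝ):ℂ) ^ (ν - 1/2) * ((s:ℂ) * deriv f (x*s))) (Ioo (0:ℝ) 1) :=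
    mul_bdd_integrable (integrableOn_w (by simp [Complex.sub_re, re_half]; linarith))
      hccont1 (fun s _ => hC1 s)
  have i2 : IntegrableOn
      (fun s => ((1 - s^2:ℝ):ℂ) ^ (ν + 1/2) * deriv (deriv f) (x*s)) (Ioo (0:ℝ) 1) :=
    mul_bdd_integrable (integrableOn_w (by simp [hre]; linarith)) hccont2
      (fun s _ => hC2 s)
  have hcont : ContinuousOn u (Icc (0:ℝ) 1) := by
    apply ContinuousOn.mul _ (hccont.continuousOn)
    intro s hs
    have hbase : Continuous (fun s : ℝ => ((1 - s ^ 2 : ℝ) : ℂ)) :=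
      Complex.continuous_ofReal.comp (by continuity)
    have hc : ContinuousAt (fun z : ℂ => z ^ (ν + 1/2)) ((1 - s ^ 2 : ℝ) : ℂ) := by
      apply Complex.continuousAt_cpow_const_of_re_pos
      · left; rw [Complex.ofReal_re]; nlinarith [hs.1, hs.2]
      · rw [hre]; linarith
    exact (ContinuousAt.comp (f := fun s : ℝ => ((1 - s ^ 2 : ℝ) : ℂ))
      (g := (· ^ (ν + 1/2))) hc hbase.continuousAt).continuousWithinAt
  have hderiv : ∀ s ∈ Ioo (0:ℝ) 1, HasDerivAt u (u' s) s := by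
    intro s hs
    have h1 : (0:ℝ) < 1 - s ^ 2 := by nlinarith [hs.1, hs.2]
    have hbase : HasDerivAt (fun s : ℝ => ((1 - s^2 : ℝ):ℂ)) ((-(2*s) : ℝ):ℂ) s := by
      have : HasDerivAt (fun s : ℝ => 1 - s^2) (-(2*s)) s := by
        simpa using ((hasDerivAt_pow 2 s).const_sub 1)
      exact this.ofReal_comp
    have hcpow : HasDerivAt (fun z : ℂ => z ^ (ν + 1/2))
        ((ν + 1/2) * ((1 - s^2 : ℝ):ℂ) ^ (ν + 1/2 - 1)) ((1 - s^2 : ℝ):ℂ) :=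
      (Complex.hasStrictDerivAt_cpow_const
        (Or.inl (by rw [Complex.ofReal_re]; exact h1))).hasDerivAt
    have hv : HasDerivAt (fun s : ℝ => ((1 - s^2 : ℝ):ℂ) ^ (ν + 1/2))
        (((ν + 1/2) * ((1 - s^2 : ℝ):ℂ) ^ (ν + 1/2 - 1)) * ((-(2*s) : ℝ):ℂ)) s :=
      by have h := hcpow.comp s hbase; exact h
    have hg2 : HasDerivAt (fun s : ℝ => deriv f (x*s)) (x • deriv (deriv f) (x*s)) s := by
      have hinner : HasDerivAt (fun s : ℝ => x * s) x s := by
        simpa using (hasDerivAt_id s).const_mul x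
      exact ((hfd2 (x*s)).hasDerivAt).scomp s hinner
    have hprod := hv.mul hg2
    refine hprod.congr_deriv ?_
    have he : ν + 1/2 - 1 = ν - 1/2 := by ring
    rw [hu', ← he]
    simp only [Complex.real_smul]
    push_cast
    ring
  have hint : IntervalIntegrable u' volume 0 1 := by
    rw [intervalIntegrable_iff_integrableOn_Ioo_of_le zero_le_one]
    exact (i1.const_mul _).add (i2.const_mul _)
  have hftc := intervalIntegral.integral_eq_sub_of_hasDerivAt_of_le zero_le_one
    hcont hderiv hint
  have hu1 : u 1 = 0 := by
    have : ((1 - (1:ℝ)^2 : ℝ):ℂ) = 0 := by norm_num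
    rw [hu]; simp only [this, Complex.zero_cpow hne, zero_mul]
  have hu0 : u 0 = 0 := by
    have : ((1 - (0:ℝ)^2 : ℝ):ℂ) = 1 := by norm_num
    rw [hu]; simp only [mul_zero, this, Complex.one_cpow, hf0, one_mul]
  rw [hu1, hu0, sub_zero, int_Ioo] at hftc
  have hsplit : ∫ s in Ioo (0:ℝ) 1, u' s
      = (-(2*ν+1)) * (∫ s in Ioo (0:ℝ) 1,
          ((1 - s^2:ℝ):ℂ) ^ (ν - 1/2) * ((s:ℂ) * deriv f (x*s)))
        + (x:ℂ) * (∫ s in Ioo (0:ℝ) 1,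
          ((1 - s^2:ℝ):ℂ) ^ (ν + 1/2) * deriv (deriv f) (x*s)) := by
    rw [hu']
    rw [integral_add (i1.const_mul _) (i2.const_mul _), integral_const_mul, integral_const_mul]
  rw [hsplit] at hftc
  linear_combination hftc

end PoissonAux

open PoissonAux Filter

/-- Poisson transmutation identity: `P_ν(f'') = B_ν(P_ν f)` where
`B_ν u = u'' + ((2ν+1)/x) u'`, for `f ∈ C_c^∞(0,∞)` and `Re ν > −1/2`. -/
theorem poisson_transmutation (ν : ℂ) (hν : -1 / 2 < ν.re)
    (f : ℝ → ℂ) (hf : ContDiff ℝ (⊤ : ℕ∞) f) (hsupp : HasCompactSupport f)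
    (hpos : tsupport f ⊆ Set.Ioi (0 : ℝ)) :
    ∀ x ∈ Set.Ioi (0 : ℝ),
      poissonOp ν (fun t => deriv (deriv f) t) x =
        deriv (deriv (poissonOp ν f)) x +
          ((2 * ν + 1) / (x : ℂ)) * deriv (poissonOp ν f) x := by
  intro x hx
  rw [mem_Ioi] at hx
  have hx' : (x:ℂ) ≠ 0 := Complex.ofReal_ne_zero.mpr hx.ne'
  have hf1 : ContDiff ℝ ((⊤:ℕ∞):WithTop ℕ∞) f := hf.of_le (by simp)
  obtain ⟨hfd, hf2⟩ := contDiff_infty_iff_deriv.mp hf1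
  obtain ⟨hfd2, hf3⟩ := contDiff_infty_iff_deriv.mp hf2
  have hreν : (ν - 1/2).re = ν.re - 1/2 := by
    simp [Complex.sub_re, re_half]
  set w : ℝ → ℂ := fun s => ((1 - s^2:ℝ):ℂ) ^ (ν - 1/2) with hw
  have hw_int : IntegrableOn w (Ioo (0:ℝ) 1) :=
    integrableOn_w (by rw [hreν]; linarith)
  have hw2_int : IntegrableOn (fun s => w s * (s:ℂ)) (Ioo (0:ℝ) 1) :=
    mul_bdd_integrable hw_int Complex.continuous_ofReal (C := 1)
      (fun s hs => by
        rw [Complex.norm_real, Real.norm_eq_abs, abs_of_pos hs.1]; exact hs.2.le)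
  set G1 : ℝ → ℂ := fun y => ∫ s in Ioo (0:ℝ) 1, w s * ((s:ℂ) * deriv f (y*s)) with hG1def
  set G2 : ℝ → ℂ := fun y =>
    ∫ s in Ioo (0:ℝ) 1, (w s * (s:ℂ)) * ((s:ℂ) * deriv (deriv f) (y*s)) with hG2def
  have hG : ∀ y, HasDerivAt (fun y => ∫ s in Ioo (0:ℝ) 1, w s * f (y*s)) (G1 y) y :=
    fun y => hasDerivAt_param w hw_int f hf1 hsupp y
  have hG1 : ∀ y, HasDerivAt G1 (G2 y) y := by
    intro y
    have h := hasDerivAt_param (fun s => w s * (s:ℂ)) hw2_int (deriv f) hf2 hsupp.deriv y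
    have hEq : (fun y => ∫ s in Ioo (0:ℝ) 1, (w s * (s:ℂ)) * deriv f (y*s)) = G1 := by
      funext z
      rw [hG1def]
      simp only [mul_assoc]
    rw [hEq] at h
    exact h
  set Cc : ℂ := 1 / (Complex.Gamma (ν + 1) * (2 : ℂ) ^ ν) with hCc
  have h1 : ∀ y ∈ Ioi (0:ℝ), poissonOp ν f y
      = Cc * ∫ s in Ioo (0:ℝ) 1, w s * f (y*s) := fun y hy =>
    poisson_eq ν hν f hy
  have hd1 : ∀ y ∈ Ioi (0:ℝ), deriv (poissonOp ν f) y = Cc * G1 y := by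
    intro y hy
    have hev : poissonOp ν f =ᶠ[nhds y]
        fun z => Cc * ∫ s in Ioo (0:ℝ) 1, w s * f (z*s) := by
      filter_upwards [isOpen_Ioi.mem_nhds hy] with z hz using h1 z hz
    rw [hev.deriv_eq, ((hG y).const_mul Cc).deriv]
  have hd2 : deriv (deriv (poissonOp ν f)) x = Cc * G2 x := by
    have hev : deriv (poissonOp ν f) =ᶠ[nhds x] fun z => Cc * G1 z := by
      filter_upwards [isOpen_Ioi.mem_nhds hx] with z hz using hd1 z hz
    rw [hev.deriv_eq, ((hG1 x).const_mul Cc).deriv]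
  rw [hd2, hd1 x hx, poisson_eq ν hν (fun t => deriv (deriv f) t) hx]
  -- key identity
  have hcsc2 : HasCompactSupport (fun s : ℝ => deriv (deriv f) (x*s)) := by
    have := (hsupp.deriv.deriv).comp_homeomorph (Homeomorph.mulLeft₀ x hx.ne')
    simpa [Function.comp_def] using this
  have hccont2 : Continuous (fun s : ℝ => deriv (deriv f) (x*s)) :=
    hf3.continuous.comp (continuous_const.mul continuous_id)
  obtain ⟨C2, hC2⟩ := hcsc2.exists_bound_of_continuous hccont2
  have ia : IntegrableOn (fun s => w s * deriv (deriv f) (x*s)) (Ioo (0:ℝ) 1) :=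
    mul_bdd_integrable hw_int hccont2 (fun s _ => hC2 s)
  have ib : IntegrableOn (fun s => (w s * (s:ℂ)) * ((s:ℂ) * deriv (deriv f) (x*s)))
      (Ioo (0:ℝ) 1) := by
    have := mul_bdd_integrable hw_int
      (ψ := fun s : ℝ => (s:ℂ) * ((s:ℂ) * deriv (deriv f) (x*s)))
      (Complex.continuous_ofReal.mul (Complex.continuous_ofReal.mul hccont2))
      (C := max C2 0)
      (fun s hs => by
        rw [norm_mul, norm_mul, Complex.norm_real, Real.norm_eq_abs, abs_of_pos hs.1]
        have h2 : ‖deriv (deriv f) (x*s)‖ ≤ max C2 0 := le_trans (hC2 _) (le_max_left _ _)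
        have hs1 : s ≤ 1 := hs.2.le
        have hs0 : 0 ≤ s := hs.1.le
        have hnn : 0 ≤ ‖deriv (deriv f) (x*s)‖ := norm_nonneg _
        have t1 : s * ‖deriv (deriv f) (x*s)‖ ≤ ‖deriv (deriv f) (x*s)‖ :=
          mul_le_of_le_one_left hnn hs1
        have t2 : s * (s * ‖deriv (deriv f) (x*s)‖) ≤ s * ‖deriv (deriv f) (x*s)‖ :=
          mul_le_of_le_one_left (mul_nonneg hs0 hnn) hs1
        exact (t2.trans t1).trans h2)
    have hEq : (fun s : ℝ => w s * ((s:ℂ) * ((s:ℂ) * deriv (deriv f) (x*s))))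
        = fun s : ℝ => (w s * (s:ℂ)) * ((s:ℂ) * deriv (deriv f) (x*s)) := by
      funext s; ring
    rwa [hEq] at this
  have hK : (∫ s in Ioo (0:ℝ) 1, w s * deriv (deriv f) (x*s))
      = G2 x + ((2*ν+1)/(x:ℂ)) * G1 x := by
    have hsub : (∫ s in Ioo (0:ℝ) 1, w s * deriv (deriv f) (x*s)) - G2 x
        = ∫ s in Ioo (0:ℝ) 1, ((1 - s^2:ℝ):ℂ) ^ (ν + 1/2) * deriv (deriv f) (x*s) := by
      rw [hG2def, ← integral_sub ia ib]
      refine setIntegral_congr_fun measurableSet_Ioo (fun s hs => ?_)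
      have h1 : (0:ℝ) < 1 - s ^ 2 := by nlinarith [hs.1, hs.2]
      have hb0 : ((1 - s^2:ℝ):ℂ) ≠ 0 := by
        rw [Ne, Complex.ofReal_eq_zero]; linarith
      have hadd : ((1 - s^2:ℝ):ℂ) ^ (ν + 1/2)
          = w s * ((1 - s^2:ℝ):ℂ) := by
        rw [hw]
        have : ν + 1/2 = (ν - 1/2) + 1 := by ring
        rw [this, Complex.cpow_add _ _ hb0, Complex.cpow_one]
      rw [hadd]
      push_cast
      ring
    have hibp := ibp ν hν f hf hsupp hpos hx
    have hdiv : (∫ s in Ioo (0:ℝ) 1, ((1 - s^2:ℝ):ℂ) ^ (ν + 1/2) * deriv (deriv f) (x*s))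
        = ((2*ν+1)/(x:ℂ)) * ∫ s in Ioo (0:ℝ) 1, w s * ((s:ℂ) * deriv f (x*s)) := by
      rw [hw]
      rw [div_mul_eq_mul_div, eq_div_iff hx']
      linear_combination hibp
    rw [hdiv] at hsub
    have hg1x : G1 x = ∫ s in Ioo (0:ℝ) 1, w s * ((s:ℂ) * deriv f (x*s)) := rfl
    rw [hg1x]
    linear_combination hsub
  linear_combination Cc * hK
end
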